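/- arXiv:2402.14144 — 3 statements merged into one kernel-verified Lean document; each statement's English description precedes it below -/
import Mathlib

section
/- Let F be a field, let (V,E) be a digraph, and let G be a square matrix over F indexed by V that is consistent with (V,E). Let V = V_A ⊔ V_B be a partition of V with blocks G_A, G_{AB}, G_{BA}, G_B of G, and assume I_B − G_B is invertible. If there is no directed path in (V,E) that starts at a node of V_A, ends at a node of V_A, and has at least one intermediate node, all of whose intermediate nodes lie in V_B, then G_{AB}(I_B − G_B)^{-1}G_{BA} = 0. Consequently, if in addition I − G is invertible, the V_A × V_A block of (I − G)^{-1} equals (I_A − G_A)^{-1}. -/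
/-!
STATEMENT 11: let `G` be consistent with a digraph `(V, E)`, let `V = V_A ⊔ V_B` be a
partition with blocks `G_A, G_{AB}, G_{BA}, G_B`, and assume `I_B - G_B` is invertible.
If there is no directed path of `(V, E)` that starts in `V_A`, ends in `V_A`, and has at
least one intermediate node, all of whose intermediate nodes lie in `V_B`, then
`G_{AB} (I_B - G_B)⁻¹ G_{BA} = 0`; consequently, if in addition `I - G` is invertible,
the `V_A × V_A` block of `(I - G)⁻¹` equals `(I_A - G_A)⁻¹`.
-/

open Matrix

noncomputable section

/-- The `S × S'` block of a matrix indexed by `V`, for subsets `S, S' ⊆ V`. -/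
def blk {F V : Type*} (S T : Finset V) (G : Matrix V V F) : Matrix ↥S ↥T F :=
  G.submatrix Subtype.val Subtype.val

/-- If `1 - B` is invertible, its inverse is a scalar multiple of a polynomial in `B`. -/
lemma inv_one_sub_eq_aeval {F n : Type*} [Field F] [Fintype n] [DecidableEq n]
    (B : Matrix n n F) (h : IsUnit ((1 : Matrix n n F) - B).det) :
    ∃ (c : F) (p : Polynomial F),
      ((1 : Matrix n n F) - B)⁻¹ = c • (Polynomial.aeval B p) := by
  set M : Matrix n n F := (1 : Matrix n n F) - B with hMdef
  have hc0 : M.charpoly.coeff 0 ≠ 0 := by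
    intro h0
    have hd := Matrix.det_eq_sign_charpoly_coeff M
    rw [h0, mul_zero] at hd
    rw [hd] at h
    simpa using h
  have hCH : Polynomial.aeval M M.charpoly = 0 := Matrix.aeval_self_charpoly M
  have hsplit : M * Polynomial.aeval M M.charpoly.divX = (-(M.charpoly.coeff 0)) • 1 := by
    have h1 := congrArg (Polynomial.aeval M) (Polynomial.X_mul_divX_add M.charpoly)
    rw [map_add, Polynomial.aeval_C, _root_.map_mul, Polynomial.aeval_X, hCH,
      Algebra.algebraMap_eq_smul_one] at h1
    rw [neg_smul]
    exact eq_neg_of_add_eq_zero_left h1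
  refine ⟨(-(M.charpoly.coeff 0))⁻¹, M.charpoly.divX.comp (1 - Polynomial.X), ?_⟩
  have haev : Polynomial.aeval B (M.charpoly.divX.comp (1 - Polynomial.X)) =
      Polynomial.aeval M M.charpoly.divX := by
    rw [Polynomial.aeval_comp]
    congr 1
    simp [hMdef]
  rw [haev]
  apply Matrix.inv_eq_right_inv
  rw [Matrix.mul_smul, hsplit, smul_smul,
    inv_mul_cancel₀ (neg_ne_zero.mpr hc0), one_smul]

theorem statement11 {F V : Type*} [Field F] [Fintype V] [DecidableEq V]
    (E : Finset (V × V)) (hnoself : ∀ v : V, (v, v) ∉ E)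
    -- `G` is consistent with `(V, E)`: `G i j = 0` whenever `(j, i) ∉ E`
    (G : Matrix V V F) (hG : ∀ i j : V, (j, i) ∉ E → G i j = 0)
    -- the partition `V = V_A ⊔ V_B`, with `V_B = V ∖ V_A` the complement of `V_A`:
    (VA : Finset V)
    (hB : IsUnit ((1 : Matrix ↥VAᶜ ↥VAᶜ F) - blk VAᶜ VAᶜ G).det)
    -- no directed path starts in `V_A`, ends in `V_A`, and has at least one
    -- intermediate node, all of whose intermediate nodes lie in `V_B`:
    (hpath : ¬ ∃ (a b : V) (l : List V), a ∈ VA ∧ b ∈ VA ∧ l ≠ [] ∧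
      (∀ v ∈ l, v ∉ VA) ∧ List.Chain (fun u v => (u, v) ∈ E) a (l ++ [b])) :
    blk VA VAᶜ G * ((1 : Matrix ↥VAᶜ ↥VAᶜ F) - blk VAᶜ VAᶜ G)⁻¹ * blk VAᶜ VA G = 0 ∧
      (IsUnit (1 - G).det →
        blk VA VA (1 - G)⁻¹ = ((1 : Matrix ↥VA ↥VA F) - blk VA VA G)⁻¹) := by
  set A : Matrix ↥VA ↥VAᶜ F := blk VA VAᶜ G with hAdef
  set B : Matrix ↥VAᶜ ↥VAᶜ F := blk VAᶜ VAᶜ G with hBdef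
  set C : Matrix ↥VAᶜ ↥VA F := blk VAᶜ VA G with hCdef
  -- Step 1: a nonzero entry of `A * B ^ n` yields a chain through `V_B`
  have hchain : ∀ n : ℕ, ∀ (a : ↥VA) (b : ↥VAᶜ), (A * B ^ n) a b ≠ 0 →
      ∃ l : List V, (∀ v ∈ l, v ∉ VA) ∧
        List.Chain (fun u v => (u, v) ∈ E) (b : V) (l ++ [(a : V)]) := by
    intro n
    induction n with
    | zero =>
      intro a b h
      rw [pow_zero, Matrix.mul_one] at h
      have he : ((b : V), (a : V)) ∈ E := by
        by_contra hne
        exact h (hG _ _ hne)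
      exact ⟨[], by simp, List.Chain.cons he List.Chain.nil⟩
    | succ n ih =>
      intro a b h
      rw [pow_succ, ← Matrix.mul_assoc, Matrix.mul_apply] at h
      obtain ⟨c, -, hc⟩ := Finset.exists_ne_zero_of_sum_ne_zero h
      have h1 := left_ne_zero_of_mul hc
      have h2 := right_ne_zero_of_mul hc
      have he : ((b : V), (c : V)) ∈ E := by
        by_contra hne
        exact h2 (hG _ _ hne)
      obtain ⟨l, hl, hch⟩ := ih a c h1
      refine ⟨(c : V) :: l, ?_, List.Chain.cons he hch⟩
      intro v hv
      rcases List.mem_cons.mp hv with rfl | hv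
      · exact Finset.mem_compl.mp c.2
      · exact hl v hv
  -- Step 2: `A * B ^ n * C = 0` for all `n`
  have hn : ∀ n : ℕ, A * B ^ n * C = 0 := by
    intro n
    ext a a'
    simp only [Matrix.zero_apply]
    by_contra h
    rw [Matrix.mul_apply] at h
    obtain ⟨b, -, hb⟩ := Finset.exists_ne_zero_of_sum_ne_zero h
    have h1 := left_ne_zero_of_mul hb
    have h2 := right_ne_zero_of_mul hb
    have he : ((a' : V), (b : V)) ∈ E := by
      by_contra hne
      exact h2 (hG _ _ hne)
    obtain ⟨l, hl, hch⟩ := hchain n a b h1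
    refine hpath ⟨(a' : V), (a : V), (b : V) :: l, a'.2, a.2, List.cons_ne_nil _ _, ?_,
      List.Chain.cons he hch⟩
    intro v hv
    rcases List.mem_cons.mp hv with rfl | hv
    · exact Finset.mem_compl.mp b.2
    · exact hl v hv
  -- Step 3: `A * p(B) * C = 0` for all polynomials `p`
  have hpoly : ∀ p : Polynomial F, A * (Polynomial.aeval B p) * C = 0 := by
    intro p
    induction p using Polynomial.induction_on' with
    | add p q hp hq => rw [map_add, Matrix.mul_add, Matrix.add_mul, hp, hq, add_zero]
    | monomial n t =>
      rw [Polynomial.aeval_monomial, Algebra.algebraMap_eq_smul_one, smul_mul_assoc,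
        one_mul, Matrix.mul_smul, Matrix.smul_mul, hn n, smul_zero]
  -- first conjunct
  have h0 : A * ((1 : Matrix ↥VAᶜ ↥VAᶜ F) - B)⁻¹ * C = 0 := by
    obtain ⟨c, p, hcp⟩ := inv_one_sub_eq_aeval B hB
    rw [hcp, Matrix.mul_smul, Matrix.smul_mul, hpoly, smul_zero]
  refine ⟨h0, ?_⟩
  -- second conjunct
  intro hdet
  let e : ↥VA ⊕ ↥VAᶜ ≃ V :=
    (Equiv.sumCongr (Equiv.refl ↥VA)
      (Equiv.subtypeEquivRight (fun x => Finset.mem_compl))).trans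
      (Equiv.sumCompl (· ∈ VA))
  have hsub : ∀ X : Matrix V V F, X.submatrix e e =
      fromBlocks (blk VA VA X) (blk VA VAᶜ X) (blk VAᶜ VA X) (blk VAᶜ VAᶜ X) := by
    intro X
    ext i j
    cases i <;> cases j <;> rfl
  set P : Matrix ↥VA ↥VA F := (1 : Matrix ↥VA ↥VA F) - blk VA VA G with hPdef
  set S : Matrix ↥VAᶜ ↥VAᶜ F := (1 : Matrix ↥VAᶜ ↥VAᶜ F) - B with hSdef
  set Q : Matrix ↥VA ↥VAᶜ F := blk VA VAᶜ (1 - G) with hQdef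
  set R : Matrix ↥VAᶜ ↥VA F := blk VAᶜ VA (1 - G) with hRdef
  have hPP : blk VA VA (1 - G) = P := by
    ext a b
    simp only [blk, hPdef, Matrix.sub_apply, Matrix.submatrix_apply, Matrix.one_apply, Subtype.ext_iff]
  have hSS : blk VAᶜ VAᶜ (1 - G) = S := by
    ext a b
    simp only [blk, hSdef, hBdef, Matrix.sub_apply, Matrix.submatrix_apply, Matrix.one_apply, Subtype.ext_iff]
  have hM : (1 - G).submatrix e e = fromBlocks P Q R S := by
    rw [hsub (1 - G), hPP, hSS]
  have hQ : Q = -A := by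
    ext a b
    have hab : (a : V) ≠ (b : V) := fun h => (Finset.mem_compl.mp b.2) (h ▸ a.2)
    simp [hQdef, hAdef, blk, Matrix.one_apply_ne hab]
  have hR : R = -C := by
    ext b a
    have hba : (b : V) ≠ (a : V) := fun h => (Finset.mem_compl.mp b.2) (h ▸ a.2)
    simp [hRdef, hCdef, blk, Matrix.one_apply_ne hba]
  haveI iS : Invertible S := Matrix.invertibleOfIsUnitDet _ hB
  haveI iM : Invertible (1 - G) := Matrix.invertibleOfIsUnitDet _ hdet
  haveI iMe : Invertible ((1 - G).submatrix e e) := Matrix.submatrixEquivInvertible _ e e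
  haveI iFB : Invertible (fromBlocks P Q R S) := iMe.copy _ hM.symm
  haveI iSchur : Invertible (P - Q * ⅟S * R) :=
    Matrix.invertibleOfFromBlocks₂₂Invertible P Q R S
  have hQSR : Q * ⅟S * R = 0 := by
    rw [hQ, hR, invOf_eq_nonsing_inv]
    simp only [Matrix.neg_mul, Matrix.mul_neg, neg_neg, h0]
  have key : P - Q * ⅟S * R = P := by rw [hQSR, sub_zero]
  have hstep : (1 - G)⁻¹.submatrix e e =
      fromBlocks (⅟(P - Q * ⅟S * R)) (-(⅟(P - Q * ⅟S * R) * Q * ⅟S))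
        (-(⅟S * R * ⅟(P - Q * ⅟S * R))) (⅟S + ⅟S * R * ⅟(P - Q * ⅟S * R) * Q * ⅟S) := by
    rw [← Matrix.inv_submatrix_equiv, hM, ← invOf_eq_nonsing_inv,
      Matrix.invOf_fromBlocks₂₂_eq]
  have hfinal : blk VA VA (1 - G)⁻¹ = ⅟(P - Q * ⅟S * R) := by
    have h2 := (hsub (1 - G)⁻¹).symm.trans hstep
    have h3 := congrArg Matrix.toBlocks₁₁ h2
    simpa [Matrix.toBlocks_fromBlocks₁₁] using h3
  rw [hfinal, invOf_eq_nonsing_inv, key]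

end
end

section
/- Let (V,E) be a parallel paths network on V = {1,…,n} with paths P_1, …, P_{n_p} (n_p ≥ 2), whose nodes are labeled so that labels strictly increase along each path. Let F be a field and let G be any matrix over F consistent with (V,E). Then I − G is invertible, and T = (I − G)^{-1} satisfies: (a) T_{vv} = 1 for every node v; (b) for internal nodes u ⪯_j v of the same path P_j, T_{vu} equals the product of the entries G_{w' w} over the edges w → w' of P_j lying between u and v; (c) for any internal node v of a path P_j, T_{v1} equals the product of the edge entries of P_j from node 1 up to v, and T_{nv} equals the product of the edge entries of P_j from v up to node n; (d) T_{vu} = 0 whenever u and v are internal nodes of two different paths, or v strictly precedes u on their common path; and (e) T_{n1} = Σ_{j=1}^{n_p} Π_{edges w → w' of P_j} G_{w' w}. -/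
open Matrix

noncomputable section

/-- A matrix `H` is consistent with the digraph `(V, E)`: `H i j = 0` whenever `(j,i) ∉ E`. -/
def Consistent {R : Type*} [Zero R] {n : ℕ} (E : Finset (Fin n × Fin n))
    (H : Matrix (Fin n) (Fin n) R) : Prop :=
  ∀ i j, (j, i) ∉ E → H i j = 0

/-- The product of the entries `G w' w` over the consecutive edges `w → w'` of the
list of nodes `l`. -/
def pathProd {F : Type*} [CommRing F] {n : ℕ} (G : Matrix (Fin n) (Fin n) F)
    (l : List (Fin n)) : F :=
  ((l.zip l.tail).map (fun p => G p.2 p.1)).prod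

namespace PPNAux
variable {α : Type*}

lemma mem_zip_tail : ∀ {l : List α} {x y : α},
    (x, y) ∈ l.zip l.tail ↔ ∃ a b, l = a ++ x :: y :: b := by
  intro l
  induction l with
  | nil => simp
  | cons c l ih =>
    intro x y
    cases l with
    | nil =>
      simp only [List.tail_cons, List.zip_nil_right, List.not_mem_nil, false_iff]
      rintro ⟨a, b, hab⟩
      rcases a with _ | ⟨a0, a'⟩ <;> simp at hab
    | cons d t =>
      rw [List.tail_cons, List.zip_cons_cons, List.mem_cons]
      constructor
      · rintro (h | h)
        · refine ⟨[], t, ?_⟩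
          obtain ⟨h1, h2⟩ := Prod.mk.injEq .. ▸ h
          simp_all
        · rcases ih.mp (by simpa using h) with ⟨a, b, hab⟩
          exact ⟨c :: a, b, by simp [hab]⟩
      · rintro ⟨a, b, hab⟩
        cases a with
        | nil =>
          simp only [List.nil_append, List.cons.injEq] at hab
          left
          simp [hab.1, hab.2.1]
        | cons a0 a' =>
          simp only [List.cons_append, List.cons.injEq] at hab
          right
          have : (x, y) ∈ (d :: t).zip (d :: t).tail := by
            rw [List.tail_cons]
            exact ih.mpr ⟨a', b, hab.2⟩
          simpa using this

lemma indexOf_split [DecidableEq α] {l a b : List α} {v : α}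
    (hn : l.Nodup) (hd : l = a ++ v :: b) : l.idxOf v = a.length := by
  subst hd
  have hv : v ∉ a := by
    rw [List.nodup_append] at hn
    exact fun hmem => hn.2.2 v hmem v List.mem_cons_self rfl
  rw [List.idxOf_append_of_notMem hv, List.idxOf_cons_self]
  omega

lemma eq_of_decomp_snd [DecidableEq α] {l : List α} (hn : l.Nodup) {a b a' b' : List α}
    {p p' v : α} (h1 : l = a ++ p :: v :: b) (h2 : l = a' ++ p' :: v :: b') : p = p' := by
  have h1' : l = (a ++ [p]) ++ v :: b := by
    rw [h1, List.append_assoc, List.singleton_append]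
  have h2' : l = (a' ++ [p']) ++ v :: b' := by
    rw [h2, List.append_assoc, List.singleton_append]
  have e1 := indexOf_split hn h1'
  have e2 := indexOf_split hn h2'
  have hlen : (a ++ [p]).length = (a' ++ [p']).length := by omega
  have h3 : (a ++ [p]) ++ v :: b = (a' ++ [p']) ++ v :: b' := h1'.symm.trans h2'
  have h4 := (List.append_inj h3 hlen).1
  simpa using (List.append_inj' h4 rfl).2

lemma eq_of_decomp_fst [DecidableEq α] {l : List α} (hn : l.Nodup) {a b a' b' : List α}
    {w w' v : α} (h1 : l = a ++ v :: w :: b) (h2 : l = a' ++ v :: w' :: b') : w = w' := by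
  have e1 : l.idxOf v = a.length := indexOf_split hn h1
  have e2 : l.idxOf v = a'.length := indexOf_split hn h2
  have h3 : a ++ v :: w :: b = a' ++ v :: w' :: b' := by rw [← h1, h2]
  have h4 := (List.append_inj h3 (by omega)).2
  simp only [List.cons.injEq, true_and] at h4
  exact h4.1

lemma ne_head {l : List α} (hn : l.Nodup) {h0 : α} (hh : l.head? = some h0)
    {a b : List α} {x c : α} (hd : l = a ++ x :: c :: b) : c ≠ h0 := by
  classical
  intro hch
  obtain ⟨t, ht⟩ := List.head?_eq_some_iff.mp hh
  rw [← hch] at ht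
  have h1' : l = (a ++ [x]) ++ c :: b := by
    rw [hd, List.append_assoc, List.singleton_append]
  have e1 := indexOf_split hn h1'
  have e2 : l.idxOf c = ([] : List α).length := indexOf_split hn (by simpa using ht)
  simp only [List.length_append, List.length_singleton, List.length_nil] at e1 e2
  omega

lemma ne_getLast {l : List α} (hn : l.Nodup) {z : α} (hz : l.getLast? = some z)
    {a b : List α} {x c : α} (hd : l = a ++ x :: c :: b) : x ≠ z := by
  classical
  intro hxz
  obtain ⟨q, hq⟩ := List.getLast?_eq_some_iff.mp hz
  rw [← hxz] at hq
  have e1 : l.idxOf x = a.length := indexOf_split hn hd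
  have e2 : l.idxOf x = q.length := indexOf_split hn hq
  have l1 : l.length = a.length + (b.length + 2) := by
    rw [hd]; simp [List.length_append]
  have l2 : l.length = q.length + 1 := by rw [hq]; simp
  omega

variable {F : Type*} [CommRing F] {n : ℕ} (G : Matrix (Fin n) (Fin n) F)

lemma pathProd_nil : pathProd G [] = 1 := rfl

lemma pathProd_single (x : Fin n) : pathProd G [x] = 1 := rfl

lemma pathProd_cons (x y : Fin n) (t : List (Fin n)) :
    pathProd G (x :: y :: t) = G y x * pathProd G (y :: t) := by
  simp [pathProd]

lemma pathProd_snoc : ∀ (l : List (Fin n)) {x : Fin n}, l.getLast? = some x →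
    ∀ y : Fin n, pathProd G (l ++ [y]) = pathProd G l * G y x := by
  intro l
  induction l with
  | nil => intro x hx; simp at hx
  | cons c l ih =>
    intro x hx y
    cases l with
    | nil =>
      simp only [List.getLast?_singleton, Option.some.injEq] at hx
      subst hx
      rw [List.singleton_append, pathProd_cons, pathProd_single, pathProd_single]
      ring
    | cons d t =>
      rw [List.getLast?_cons_cons] at hx
      rw [List.cons_append, List.cons_append, pathProd_cons, ← List.cons_append,
        ih hx y, pathProd_cons, mul_assoc]

end PPNAux

/-- `(V, E)` with `V = Fin (m+2)` is a parallel paths network with paths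
`P j` (each given as the list of its nodes from source `0` to sink `Fin.last (m+1)`). -/
structure IsPPN (m : ℕ) (E : Finset (Fin (m + 2) × Fin (m + 2))) (np : ℕ)
    (P : Fin np → List (Fin (m + 2))) : Prop where
  /-- there are at least two paths -/
  two_le : 2 ≤ np
  /-- no self-loops -/
  no_self : ∀ v : Fin (m + 2), (v, v) ∉ E
  /-- each path starts at the source, node `0` -/
  head : ∀ j, (P j).head? = some 0
  /-- each path ends at the sink, node `Fin.last (m+1)` -/
  last : ∀ j, (P j).getLast? = some (Fin.last (m + 1))
  /-- each path visits distinct nodes -/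
  nodup : ∀ j, (P j).Nodup
  /-- consecutive nodes of each path are joined by edges -/
  chain : ∀ j, (P j).Chain' (fun u v => (u, v) ∈ E)
  /-- `E` is exactly the union of the edge sets of the paths -/
  edges : ∀ e : Fin (m + 2) × Fin (m + 2), e ∈ E ↔ ∃ j, e ∈ (P j).zip (P j).tail
  /-- two distinct paths share only the source and the sink -/
  inter : ∀ j k, j ≠ k → ∀ v, v ∈ P j → v ∈ P k → v = 0 ∨ v = Fin.last (m + 1)
  /-- every node lies on at least one path -/
  cover : ∀ v : Fin (m + 2), ∃ j, v ∈ P j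
  /-- at most one path is the single edge `source → sink` (i.e. has no internal node);
  every other path has at least one internal node -/
  single_edge_unique : ∀ j k, (P j).length = 2 → (P k).length = 2 → j = k
  /-- the source is the unique source of the digraph -/
  unique_source : ∀ v : Fin (m + 2), (∀ u, (u, v) ∉ E) → v = 0
  /-- the sink is the unique sink of the digraph -/
  unique_sink : ∀ v : Fin (m + 2), (∀ u, (v, u) ∉ E) → v = Fin.last (m + 1)

/-- `v` is an internal node of the path `P j`: it lies on `P j` and is neither the
source nor the sink. -/
def Internal (m : ℕ) {np : ℕ} (P : Fin np → List (Fin (m + 2))) (j : Fin np)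
    (v : Fin (m + 2)) : Prop :=
  v ∈ P j ∧ v ≠ 0 ∧ v ≠ Fin.last (m + 1)

theorem statement13 (m np : ℕ) (E : Finset (Fin (m + 2) × Fin (m + 2)))
    (P : Fin np → List (Fin (m + 2))) (hPPN : IsPPN m E np P)
    -- node labels strictly increase along each path:
    (hmono : ∀ j, (P j).Chain' (· < ·))
    (F : Type*) [Field F]
    (G : Matrix (Fin (m + 2)) (Fin (m + 2)) F) (hG : Consistent E G) :
    -- `I - G` is invertible:
    IsUnit (1 - G).det ∧
    -- (a)
    (∀ v : Fin (m + 2), (1 - G)⁻¹ v v = 1) ∧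
    -- (b): `s` is the contiguous segment of `P j` from the internal node `u` to the
    -- internal node `v` (so `u ⪯_j v`)
    (∀ (j : Fin np) (l₁ s l₂ : List (Fin (m + 2))) (u v : Fin (m + 2)),
      P j = l₁ ++ s ++ l₂ → s.head? = some u → s.getLast? = some v →
      Internal m P j u → Internal m P j v → (1 - G)⁻¹ v u = pathProd G s) ∧
    -- (c): `s` is the prefix of `P j` from the source `0` up to the internal node `v`
    (∀ (j : Fin np) (s l₂ : List (Fin (m + 2))) (v : Fin (m + 2)),
      P j = s ++ l₂ → s.getLast? = some v → Internal m P j v →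
      (1 - G)⁻¹ v 0 = pathProd G s) ∧
    -- (c): `s` is the suffix of `P j` from the internal node `v` up to the sink
    (∀ (j : Fin np) (l₁ s : List (Fin (m + 2))) (v : Fin (m + 2)),
      P j = l₁ ++ s → s.head? = some v → Internal m P j v →
      (1 - G)⁻¹ (Fin.last (m + 1)) v = pathProd G s) ∧
    -- (d): `u` and `v` internal nodes of two different paths
    (∀ (j k : Fin np) (u v : Fin (m + 2)), j ≠ k →
      Internal m P j u → Internal m P k v → (1 - G)⁻¹ v u = 0) ∧
    -- (d): `v` strictly precedes `u` on their common path
    (∀ (j : Fin np) (u v : Fin (m + 2)),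
      Internal m P j u → Internal m P j v → (P j).idxOf v < (P j).idxOf u →
      (1 - G)⁻¹ v u = 0) ∧
    -- (e)
    (1 - G)⁻¹ (Fin.last (m + 1)) 0 = ∑ j : Fin np, pathProd G (P j) := by
  classical
  -- every edge increases the label
  have hlt : ∀ u v : Fin (m + 2), (u, v) ∈ E → u < v := by
    intro u v huv
    obtain ⟨j, hj⟩ := (hPPN.edges (u, v)).mp huv
    obtain ⟨a, b, hab⟩ := PPNAux.mem_zip_tail.mp hj
    have hc : (P j).Chain' (· < ·) := hmono j
    rw [hab] at hc
    have := hc.suffix (List.suffix_append a (u :: v :: b))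
    exact (List.isChain_cons_cons.mp this).1
  have hG0 : ∀ i j : Fin (m + 2), ¬ j < i → G i j = 0 := by
    intro i j hij
    exact hG i j fun hmem => hij (hlt _ _ hmem)
  have hGdiag : ∀ v, G v v = 0 := fun v => hG v v (hPPN.no_self v)
  have htri : (1 - G).BlockTriangular OrderDual.toDual := by
    intro i j hij
    have hij' : i < j := hij
    rw [Matrix.sub_apply, Matrix.one_apply_ne (ne_of_lt hij'), hG0 i j (lt_asymm hij'),
      sub_zero]
  have hdet : IsUnit (1 - G).det := by
    rw [Matrix.det_of_lowerTriangular _ htri]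
    have hone : ∀ v : Fin (m + 2), (1 - G) v v = 1 := fun v => by
      rw [Matrix.sub_apply, Matrix.one_apply_eq, hGdiag v, sub_zero]
    simp [hone]
  set T := (1 - G)⁻¹ with hTdef
  have hmul : (1 - G) * T = 1 := Matrix.mul_nonsing_inv _ hdet
  have hmul' : T * (1 - G) = 1 := Matrix.nonsing_inv_mul _ hdet
  have hrecL : ∀ v u : Fin (m + 2),
      T v u = (if v = u then (1 : F) else 0) + ∑ w, G v w * T w u := by
    have h0 : (1 - G) * T = 1 := hmul
    rw [sub_mul, one_mul, sub_eq_iff_eq_add] at h0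
    intro v u
    conv_lhs => rw [h0]
    rw [Matrix.add_apply, Matrix.mul_apply, Matrix.one_apply, add_comm]
  have hrecR : ∀ v u : Fin (m + 2),
      T v u = (if v = u then (1 : F) else 0) + ∑ w, T v w * G w u := by
    have h0 : T * (1 - G) = 1 := hmul'
    rw [mul_sub, mul_one, sub_eq_iff_eq_add] at h0
    intro v u
    conv_lhs => rw [h0]
    rw [Matrix.add_apply, Matrix.mul_apply, Matrix.one_apply, add_comm]
  -- T is lower triangular
  have Tlow0 : ∀ (N : ℕ) (v u : Fin (m + 2)), v.val < N → v < u → T v u = 0 := by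
    intro N
    induction N with
    | zero => intro v u h; omega
    | succ N ih =>
      intro v u hvN hvu
      rw [hrecL v u, if_neg (ne_of_lt hvu), zero_add]
      refine Finset.sum_eq_zero fun w _ => ?_
      by_cases hw : w < v
      · have hw' : (w : ℕ) < (v : ℕ) := hw
        rw [ih w u (by omega) (hw.trans hvu), mul_zero]
      · rw [hG0 v w hw, zero_mul]
  have Tlow : ∀ v u : Fin (m + 2), v < u → T v u = 0 := fun v u h =>
    Tlow0 (v.val + 1) v u (by omega) h
  -- (a)
  have hdiag : ∀ v : Fin (m + 2), T v v = 1 := by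
    intro v
    rw [hrecL v v, if_pos rfl]
    have : ∑ w, G v w * T w v = 0 := Finset.sum_eq_zero fun w _ => by
      by_cases hw : w < v
      · rw [Tlow w v hw, mul_zero]
      · rw [hG0 v w hw, zero_mul]
    rw [this, add_zero]
  have hedge_of_decomp : ∀ (k : Fin np) (a b : List (Fin (m + 2))) (x y : Fin (m + 2)),
      P k = a ++ x :: y :: b → (x, y) ∈ E := fun k a b x y hd =>
    (hPPN.edges (x, y)).mpr ⟨k, PPNAux.mem_zip_tail.mpr ⟨a, b, hd⟩⟩
  have pred_unique : ∀ (k : Fin np) (a b : List (Fin (m + 2))) (p v : Fin (m + 2)),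
      P k = a ++ p :: v :: b → v ≠ Fin.last (m + 1) → ∀ w, (w, v) ∈ E → w = p := by
    intro k a b p v hd hvl w hw
    obtain ⟨k', hk'⟩ := (hPPN.edges (w, v)).mp hw
    obtain ⟨a', b', hd'⟩ := PPNAux.mem_zip_tail.mp hk'
    have hv0 : v ≠ 0 := PPNAux.ne_head (hPPN.nodup k) (hPPN.head k) hd
    have hkk : k' = k := by
      by_contra hne
      have hvPk : v ∈ P k := by rw [hd]; simp
      have hvPk' : v ∈ P k' := by rw [hd']; simp
      rcases hPPN.inter k' k hne v hvPk' hvPk with h | h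
      · exact hv0 h
      · exact hvl h
    rw [hkk] at hd'
    exact PPNAux.eq_of_decomp_snd (hPPN.nodup k) hd' hd
  have succ_unique : ∀ (k : Fin np) (a b : List (Fin (m + 2))) (v w' : Fin (m + 2)),
      P k = a ++ v :: w' :: b → v ≠ 0 → ∀ w, (v, w) ∈ E → w = w' := by
    intro k a b v w' hd hv0 w hw
    obtain ⟨k', hk'⟩ := (hPPN.edges (v, w)).mp hw
    obtain ⟨a', b', hd'⟩ := PPNAux.mem_zip_tail.mp hk'
    have hvl : v ≠ Fin.last (m + 1) := PPNAux.ne_getLast (hPPN.nodup k) (hPPN.last k) hd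
    have hkk : k' = k := by
      by_contra hne
      have hvPk : v ∈ P k := by rw [hd]; simp
      have hvPk' : v ∈ P k' := by rw [hd']; simp
      rcases hPPN.inter k' k hne v hvPk' hvPk with h | h
      · exact hv0 h
      · exact hvl h
    rw [hkk] at hd'
    exact PPNAux.eq_of_decomp_fst (hPPN.nodup k) hd' hd
  have step_pred : ∀ (k : Fin np) (a b : List (Fin (m + 2))) (p v : Fin (m + 2)),
      P k = a ++ p :: v :: b → v ≠ Fin.last (m + 1) → ∀ u : Fin (m + 2), v ≠ u →
      T v u = G v p * T p u := by
    intro k a b p v hd hvl u hvu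
    rw [hrecL v u, if_neg hvu, zero_add]
    refine Finset.sum_eq_single p (fun w _ hwp => ?_)
      (fun h => absurd (Finset.mem_univ p) h)
    by_cases hwE : (w, v) ∈ E
    · exact absurd (pred_unique k a b p v hd hvl w hwE) hwp
    · rw [hG v w hwE, zero_mul]
  have step_succ : ∀ (k : Fin np) (a b : List (Fin (m + 2))) (v w' : Fin (m + 2)),
      P k = a ++ v :: w' :: b → v ≠ 0 →
      T (Fin.last (m + 1)) v = T (Fin.last (m + 1)) w' * G w' v := by
    intro k a b v w' hd hv0
    have hvl : v ≠ Fin.last (m + 1) := PPNAux.ne_getLast (hPPN.nodup k) (hPPN.last k) hd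
    rw [hrecR (Fin.last (m + 1)) v, if_neg (fun h => hvl h.symm), zero_add]
    refine Finset.sum_eq_single w' (fun w _ hww => ?_)
      (fun h => absurd (Finset.mem_univ w') h)
    by_cases hwE : (v, w) ∈ E
    · exact absurd (succ_unique k a b v w' hd hv0 w hwE) hww
    · rw [hG w v hwE, mul_zero]
  -- main segment lemma
  have B : ∀ (s : List (Fin (m + 2))) (j : Fin np) (l₁ l₂ : List (Fin (m + 2)))
      (u v : Fin (m + 2)), P j = l₁ ++ s ++ l₂ → s.head? = some u →
      s.getLast? = some v → v ≠ Fin.last (m + 1) → T v u = pathProd G s := by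
    intro s
    induction s using List.reverseRecOn with
    | nil => intro j l₁ l₂ u v _ hh _ _; simp at hh
    | append_singleton s'' x ih =>
      intro j l₁ l₂ u v hP hh hl hvlast
      rw [List.getLast?_concat] at hl
      obtain rfl : v = x := (Option.some.inj hl).symm
      rcases eq_or_ne s'' [] with rfl | hne
      · obtain rfl : u = v := by symm; simpa using hh
        rw [hdiag]
        simp [pathProd]
      · obtain ⟨s0, t'', rfl⟩ := List.exists_cons_of_ne_nil hne
        obtain rfl : u = s0 := by symm; simpa using hh
        have hgs : ∃ v', (u :: t'').getLast? = some v' :=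
          ⟨(u :: t'').getLast (by simp), List.getLast?_eq_getLast _⟩
        obtain ⟨v', hgs⟩ := hgs
        obtain ⟨s''', h3⟩ := List.getLast?_eq_some_iff.mp hgs
        have hPd : P j = (l₁ ++ s''') ++ v' :: v :: l₂ := by
          rw [hP, h3]; simp
        have hsub : (((u :: t'') ++ [v]) : List (Fin (m + 2))).Sublist (P j) := by
          rw [hP, List.append_assoc]
          exact (List.sublist_append_left _ l₂).trans (List.sublist_append_right l₁ _)
        have hnods := (hPPN.nodup j).sublist hsub
        have hvu : v ≠ u := PPNAux.ne_head hnods (by simp)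
          (show ((u :: t'') ++ [v] : List (Fin (m + 2))) = s''' ++ v' :: v :: [] by
            rw [h3]; simp)
        rw [step_pred j (l₁ ++ s''') l₂ v' v hPd hvlast u hvu]
        have hv'l : v' ≠ Fin.last (m + 1) :=
          PPNAux.ne_getLast (hPPN.nodup j) (hPPN.last j) hPd
        have ihres := ih j l₁ (v :: l₂) u v' (by rw [hP]; simp) (by simp) hgs hv'l
        have hfin := PPNAux.pathProd_snoc G (u :: t'') hgs v
        simp only [List.cons_append] at hfin ⊢
        rw [ihres, hfin]
        ring
  -- suffix lemma
  have C : ∀ (s : List (Fin (m + 2))) (j : Fin np) (l₁ : List (Fin (m + 2)))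
      (v : Fin (m + 2)), P j = l₁ ++ s → s.head? = some v → v ≠ 0 →
      T (Fin.last (m + 1)) v = pathProd G s := by
    intro s
    induction s with
    | nil => intro j l₁ v _ hh _; simp at hh
    | cons x rest ih =>
      intro j l₁ v hP hh hv0
      rw [List.head?_cons] at hh
      obtain rfl : v = x := (Option.some.inj hh).symm
      cases rest with
      | nil =>
        have hvl : some v = some (Fin.last (m + 1)) := by
          rw [← hPPN.last j, hP]
          simp
        obtain rfl : v = Fin.last (m + 1) := Option.some.inj hvl
        rw [hdiag, PPNAux.pathProd_single]
      | cons w' rest' =>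
        rw [step_succ j l₁ rest' v w' hP hv0]
        have hw0 : w' ≠ 0 := PPNAux.ne_head (hPPN.nodup j) (hPPN.head j) hP
        rw [ih j (l₁ ++ [v]) w' (by rw [hP]; simp) rfl hw0, PPNAux.pathProd_cons]
        ring
  -- vanishing lemma
  have D : ∀ (j : Fin np) (u : Fin (m + 2)), Internal m P j u →
      ∀ (N : ℕ) (v : Fin (m + 2)), v.val < N → ∀ k : Fin np, Internal m P k v →
      (k ≠ j ∨ (P j).idxOf v < (P j).idxOf u) → T v u = 0 := by
    intro j u hu N
    induction N with
    | zero => intro v hv; omega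
    | succ N ihN =>
      intro v hvN k hv hcase
      obtain ⟨hvP, hv0, hvl⟩ := hv
      obtain ⟨c, d, hcd⟩ := List.append_of_mem hvP
      have hc_ne : c ≠ [] := by
        rintro rfl
        have hhk := hPPN.head k
        rw [hcd] at hhk
        exact hv0 (by simpa using hhk)
      obtain ⟨a, p, hap⟩ := (List.eq_nil_or_concat c).resolve_left hc_ne
      have hd2 : P k = a ++ p :: v :: d := by
        rw [hcd, hap]; simp
      have hvu : v ≠ u := by
        rcases hcase with hk | hidx
        · intro hvu'
          rw [hvu'] at hvP hv0 hvl
          rcases hPPN.inter k j hk u hvP hu.1 with h | h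
          · exact hv0 h
          · exact hvl h
        · intro hvu'
          rw [hvu'] at hidx
          omega
      rw [step_pred k a d p v hd2 hvl u hvu]
      rcases eq_or_ne p 0 with rfl | hp0
      · rw [Tlow 0 u (Fin.pos_of_ne_zero hu.2.1), mul_zero]
      · have hpl : p ≠ Fin.last (m + 1) :=
          PPNAux.ne_getLast (hPPN.nodup k) (hPPN.last k) hd2
        have hpP : p ∈ P k := by rw [hd2]; simp
        have hpv : (p : ℕ) < (v : ℕ) := hlt p v (hedge_of_decomp k a d p v hd2)
        have hnext : k ≠ j ∨ (P j).idxOf p < (P j).idxOf u := by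
          rcases eq_or_ne k j with rfl | hkj
          · right
            have hidx : (P k).idxOf v < (P k).idxOf u :=
              hcase.resolve_left (by simp)
            have e1 : (P k).idxOf p = a.length :=
              PPNAux.indexOf_split (hPPN.nodup k) hd2
            have e2 : (P k).idxOf v = (a ++ [p]).length :=
              PPNAux.indexOf_split (hPPN.nodup k)
                (by rw [hd2, List.append_assoc, List.singleton_append])
            simp only [List.length_append, List.length_singleton] at e2
            omega
          · exact Or.inl hkj
        rw [ihN p (by omega) k ⟨hpP, hp0, hpl⟩ hnext, mul_zero]
  have hlast0 : (Fin.last (m + 1) : Fin (m + 2)) ≠ 0 := by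
    simp [Fin.ext_iff]
  refine ⟨hdet, hdiag, ?_, ?_, ?_, ?_, ?_, ?_⟩
  · -- (b)
    intro j l₁ s l₂ u v hP hh hl hu hv
    exact B s j l₁ l₂ u v hP hh hl hv.2.2
  · -- (c1)
    intro j s l₂ v hP hl hv
    have hs_ne : s ≠ [] := by rintro rfl; simp at hl
    obtain ⟨s0, t, rfl⟩ := List.exists_cons_of_ne_nil hs_ne
    have hh := hPPN.head j
    rw [hP] at hh
    obtain rfl : s0 = 0 := by simpa using hh
    exact B (0 :: t) j [] l₂ 0 v (by rw [hP]; simp) rfl hl hv.2.2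
  · -- (c2)
    intro j l₁ s v hP hh hv
    exact C s j l₁ v hP hh hv.2.1
  · -- (d1)
    intro j k u v hjk hu hv
    exact D j u hu (v.val + 1) v (by omega) k hv (Or.inl hjk.symm)
  · -- (d2)
    intro j u v hu hv hidx
    exact D j u hu (v.val + 1) v (by omega) j hv (Or.inr hidx)
  · -- (e)
    set e : Fin np → Fin (m + 2) := fun j => (P j).dropLast.getLastD 0 with he
    have hdecomp : ∀ j : Fin np, ∃ r : List (Fin (m + 2)),
        P j = r ++ [e j, Fin.last (m + 1)] := by
      intro j
      obtain ⟨q, hq⟩ := List.getLast?_eq_some_iff.mp (hPPN.last j)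
      have hq_ne : q ≠ [] := by
        rintro rfl
        have hh := hPPN.head j
        rw [hq] at hh
        have : Fin.last (m + 1) = 0 := by simpa using hh
        exact hlast0 this
      obtain ⟨r, w, hrw⟩ := (List.eq_nil_or_concat q).resolve_left hq_ne
      rw [List.concat_eq_append] at hrw
      have hej : e j = w := by
        rw [he]
        simp only
        rw [hq, List.dropLast_concat, hrw]
        simp [List.getLastD_concat]
      refine ⟨r, ?_⟩
      rw [hq, hrw, hej]
      simp
    choose r hr using hdecomp
    have hel : ∀ j, e j ≠ Fin.last (m + 1) := fun j =>
      PPNAux.ne_getLast (hPPN.nodup j) (hPPN.last j) (hr j)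
    have key1 : ∀ j : Fin np,
        G (Fin.last (m + 1)) (e j) * T (e j) 0 = pathProd G (P j) := by
      intro j
      have hPj := hr j
      have hhead : (r j ++ [e j]).head? = some 0 := by
        have hh := hPPN.head j
        rw [hPj] at hh
        rw [List.head?_append] at hh ⊢
        simp only [List.head?_cons] at hh ⊢
        exact hh
      have hTB := B (r j ++ [e j]) j [] [Fin.last (m + 1)] 0 (e j)
        (by rw [hPj]; simp) hhead List.getLast?_concat (hel j)
      have hpp : pathProd G (P j)
          = pathProd G (r j ++ [e j]) * G (Fin.last (m + 1)) (e j) := by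
        rw [show P j = (r j ++ [e j]) ++ [Fin.last (m + 1)] by rw [hPj]; simp]
        exact PPNAux.pathProd_snoc G _ List.getLast?_concat _
      rw [hTB, hpp]
      ring
    have hinj : Function.Injective e := by
      intro j k hjk
      by_contra hne
      have hmemj : e j ∈ P j := by rw [hr j]; simp
      have hmemk : e j ∈ P k := by rw [hr k, ← hjk]; simp
      rcases hPPN.inter j k hne (e j) hmemj hmemk with h0 | hl
      · have hlen : ∀ i : Fin np, e i = 0 → (P i).length = 2 := by
          intro i h0i
          have hri : r i = [] := by
            by_contra hrne
            obtain ⟨a, x, hax⟩ := (List.eq_nil_or_concat (r i)).resolve_left hrne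
            rw [List.concat_eq_append] at hax
            have : (0 : Fin (m + 2)) ≠ 0 :=
              PPNAux.ne_head (hPPN.nodup i) (hPPN.head i)
                (show P i = a ++ x :: (0 : Fin (m + 2)) :: [Fin.last (m + 1)] by
                  rw [hr i, hax, h0i]; simp)
            exact this rfl
          rw [hr i, hri, h0i]
          rfl
        exact hne (hPPN.single_edge_unique j k (hlen j h0) (hlen k (hjk ▸ h0)))
      · exact hel j hl
    have hvanish : ∀ w : Fin (m + 2), w ∉ Finset.univ.image e →
        G (Fin.last (m + 1)) w * T w 0 = 0 := by
      intro w hw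
      by_cases hwE : (w, Fin.last (m + 1)) ∈ E
      · exfalso
        obtain ⟨k, hk⟩ := (hPPN.edges _).mp hwE
        obtain ⟨a, b, hab⟩ := PPNAux.mem_zip_tail.mp hk
        have hb : b = [] := by
          cases b with
          | nil => rfl
          | cons b0 b' =>
            have : Fin.last (m + 1) ≠ Fin.last (m + 1) :=
              PPNAux.ne_getLast (hPPN.nodup k) (hPPN.last k)
                (show P k = (a ++ [w]) ++ Fin.last (m + 1) :: b0 :: b' by
                  rw [hab]; simp)
            exact absurd rfl this
        subst hb
        have hek : e k = w := by
          rw [he]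
          simp only
          rw [hab, show a ++ [w, Fin.last (m + 1)]
              = (a ++ [w]) ++ [Fin.last (m + 1)] by simp, List.dropLast_concat]
          simp [List.getLastD_concat]
        exact hw (Finset.mem_image.mpr ⟨k, Finset.mem_univ k, hek⟩)
      · rw [hG _ _ hwE, zero_mul]
    rw [hrecL (Fin.last (m + 1)) 0, if_neg hlast0, zero_add]
    rw [← Finset.sum_subset (Finset.subset_univ (Finset.univ.image e))
      (fun w _ hw => hvanish w hw)]
    rw [Finset.sum_image (fun j _ k _ h => hinj h)]
    exact Finset.sum_congr rfl fun j _ => key1 j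

end
end

section
/- (Strong sufficiency for parallel paths networks.) Let (V,E) be a parallel paths network on V = {1,…,n} with paths P_1, …, P_{n_p} (n_p ≥ 2), and let (B,C) be an EMP satisfying: 1 ∈ B, n ∈ C, B ∪ C = V, and there are at least n_p − 1 indices j such that path P_j has internal nodes u and v with u ⪯_j v, u ∈ B and v ∈ C. Let F be any field and let G be a matrix over F consistent with (V,E) all of whose edge entries are nonzero (G_{ij} ≠ 0 for every (j,i) ∈ E). Then for every matrix G̃ over F consistent with (V,E), the equality of the submatrices of (I − G)^{-1} and (I − G̃)^{-1} with rows indexed by C and columns indexed by B implies G̃ = G. (Here I − G and I − G̃ are automatically invertible since any matrix consistent with a PPN is nilpotent.) -/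
/-!
STATEMENT 16 (Strong sufficiency for parallel paths networks): let `(V, E)` be a parallel
paths network with paths `P₁, …, P_{n_p}` (`n_p ≥ 2`) and let `(B, C)` be an EMP with
`1 ∈ B` (source excited), `n ∈ C` (sink measured), `B ∪ C = V`, and at least `n_p - 1`
paths containing internal nodes `u ⪯ v` with `u ∈ B`, `v ∈ C`. Then for any field `F` and
any matrix `G` consistent with `(V, E)` all of whose edge entries are nonzero, every
matrix `G̃` consistent with `(V, E)` whose `C × B` submatrix of `(I - G̃)⁻¹` agrees with
that of `(I - G)⁻¹` satisfies `G̃ = G`.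
-/

open Matrix

noncomputable section

namespace St16

variable {m np : ℕ} {E : Finset (Fin (m + 2) × Fin (m + 2))}
  {P : Fin np → List (Fin (m + 2))}

/-- `i`-th node of a path, with default `0`. -/
def nth (L : List (Fin (m + 2))) (i : ℕ) : Fin (m + 2) := L.getD i 0

lemma nth_eq (L : List (Fin (m + 2))) {i : ℕ} (h : i < L.length) :
    nth L i = L.get ⟨i, h⟩ := by
  rw [List.get_eq_getElem]; exact List.getD_eq_getElem L 0 h

lemma mem_zip_tail {L : List (Fin (m + 2))} {u v : Fin (m + 2)} :
    (u, v) ∈ L.zip L.tail ↔ ∃ i, i + 1 < L.length ∧ nth L i = u ∧ nth L (i + 1) = v := by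
  have hlen : (L.zip L.tail).length = L.length - 1 := by
    rw [List.length_zip, List.length_tail]; omega
  have key : ∀ (i : ℕ) (hi : i < (L.zip L.tail).length),
      (L.zip L.tail).get ⟨i, hi⟩ = (nth L i, nth L (i + 1)) := by
    intro i hi
    have hi1 : i + 1 < L.length := by omega
    have hit : i < L.tail.length := by rw [List.length_tail]; omega
    rw [List.get_eq_getElem, List.getElem_zip]
    have h2 : L.tail[i]'hit = L[i + 1]'hi1 := by
      have := List.get_tail L i hit hi1
      simpa using this
    rw [nth_eq L (by omega), nth_eq L hi1]
    simp [h2]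
  constructor
  · intro h
    obtain ⟨⟨i, hi⟩, hget⟩ := List.mem_iff_get.mp h
    rw [key i hi] at hget
    exact ⟨i, by omega, congrArg Prod.fst hget, congrArg Prod.snd hget⟩
  · rintro ⟨i, hi, hu, hv⟩
    exact List.mem_iff_get.mpr ⟨⟨i, by omega⟩, by rw [key i (by omega), hu, hv]⟩

variable (hP : IsPPN m E np P)
include hP

lemma two_le_length (j : Fin np) : 2 ≤ (P j).length := by
  rcases hL : P j with _ | ⟨a, L'⟩
  · have := hP.head j; simp [hL] at this
  rcases L' with _ | ⟨b, L''⟩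
  · exfalso
    have h1 := hP.head j
    have h2 := hP.last j
    rw [hL] at h1 h2
    simp at h1 h2
    rw [h1] at h2
    have : (0 : Fin (m + 2)).val = (Fin.last (m + 1)).val := by rw [h2]
    simp at this
  · simp

lemma nth_zero (j : Fin np) : nth (P j) 0 = 0 := by
  rcases hL : P j with _ | ⟨a, L'⟩
  · have := hP.head j; simp [hL] at this
  · have := hP.head j; rw [hL] at this; simp at this; simp [nth, this]

lemma nth_lastIdx (j : Fin np) : nth (P j) ((P j).length - 1) = Fin.last (m + 1) := by
  have h2 : 2 ≤ (P j).length := two_le_length hP j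
  have hne : P j ≠ [] := by intro h; rw [h] at h2; simp at h2
  have h1 := hP.last j
  rw [List.getLast?_eq_getLast hne, Option.some_inj] at h1
  rw [nth_eq (P j) (by omega), List.get_eq_getElem, ← List.getLast_eq_getElem hne]
  exact h1

lemma nth_inj (j : Fin np) {i i' : ℕ} (hi : i < (P j).length) (hi' : i' < (P j).length)
    (h : nth (P j) i = nth (P j) i') : i = i' := by
  rw [nth_eq (P j) hi, nth_eq (P j) hi'] at h
  exact Fin.mk.inj_iff.mp ((List.Nodup.get_inj_iff (hP.nodup j)).mp h)

lemma mem_iff_nth {j : Fin np} {v : Fin (m + 2)} :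
    v ∈ P j ↔ ∃ i, i < (P j).length ∧ nth (P j) i = v := by
  rw [List.mem_iff_get]
  constructor
  · rintro ⟨⟨i, hi⟩, h⟩; exact ⟨i, hi, by rw [nth_eq (P j) hi]; exact h⟩
  · rintro ⟨i, hi, h⟩; exact ⟨⟨i, hi⟩, by rw [← nth_eq (P j) hi]; exact h⟩

lemma edge_iff {u v : Fin (m + 2)} :
    (u, v) ∈ E ↔ ∃ j i, i + 1 < (P j).length ∧ nth (P j) i = u ∧ nth (P j) (i + 1) = v := by
  rw [hP.edges]
  constructor
  · rintro ⟨j, h⟩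
    obtain ⟨i, hi, h1, h2⟩ := mem_zip_tail.mp h
    exact ⟨j, i, hi, h1, h2⟩
  · rintro ⟨j, i, hi, h1, h2⟩
    exact ⟨j, mem_zip_tail.mpr ⟨i, hi, h1, h2⟩⟩

/-- nodes at internal positions are internal -/
lemma internal_nth {j : Fin np} {i : ℕ} (h1 : 1 ≤ i) (h2 : i + 1 < (P j).length) :
    Internal m P j (nth (P j) i) := by
  refine ⟨mem_iff_nth hP |>.mpr ⟨i, by omega, rfl⟩, ?_, ?_⟩
  · intro h
    rw [← nth_zero hP j] at h
    have := nth_inj hP j (by omega) (by have := two_le_length hP j; omega) h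
    omega
  · intro h
    rw [← nth_lastIdx hP j] at h
    have := nth_inj hP j (by omega) (by have := two_le_length hP j; omega) h
    omega

/-- an internal node has an internal position -/
lemma internal_index {j : Fin np} {v : Fin (m + 2)} (h : Internal m P j v) :
    ∃ i, 1 ≤ i ∧ i + 1 < (P j).length ∧ nth (P j) i = v := by
  obtain ⟨hm, h0, hl⟩ := h
  obtain ⟨i, hi, hv⟩ := (mem_iff_nth hP).mp hm
  refine ⟨i, ?_, ?_, hv⟩
  · rcases Nat.eq_zero_or_pos i with h | h
    · exfalso; exact h0 (by rw [← hv, h, nth_zero hP j])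
    · exact h
  · have hne : i ≠ (P j).length - 1 := by
      intro h; exact hl (by rw [← hv, h, nth_lastIdx hP j])
    omega

/-- the internal node's path is unique -/
lemma path_unique {j k : Fin np} {v : Fin (m + 2)} (h : Internal m P j v) (hk : v ∈ P k) :
    k = j := by
  by_contra hne
  rcases hP.inter k j hne v hk h.1 with h0 | hl
  · exact h.2.1 h0
  · exact h.2.2 hl

/-- the source has no incoming edges -/
lemma no_in_zero (u : Fin (m + 2)) : (u, (0 : Fin (m + 2))) ∉ E := by
  intro h
  obtain ⟨j, i, hi, _, h2⟩ := (edge_iff hP).mp h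
  rw [← nth_zero hP j] at h2
  have := nth_inj hP j hi (by have := two_le_length hP j; omega) h2
  omega

/-- the sink has no outgoing edges -/
lemma no_out_snk (u : Fin (m + 2)) : ((Fin.last (m + 1) : Fin (m + 2)), u) ∉ E := by
  intro h
  obtain ⟨j, i, hi, h1, _⟩ := (edge_iff hP).mp h
  rw [← nth_lastIdx hP j] at h1
  have := nth_inj hP j (by omega) (by have := two_le_length hP j; omega) h1
  omega

/-- unique in-neighbour of an internal-position node -/
lemma pred_unique {j : Fin np} {i : ℕ} (h1 : 1 ≤ i) (h2 : i + 1 < (P j).length)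
    (u : Fin (m + 2)) : (u, nth (P j) i) ∈ E ↔ u = nth (P j) (i - 1) := by
  constructor
  · intro h
    obtain ⟨k, t, ht, hu, hv⟩ := (edge_iff hP).mp h
    have hint : Internal m P j (nth (P j) i) := internal_nth hP h1 h2
    have hk : k = j := path_unique hP hint (by
      rw [← hv]; exact (mem_iff_nth hP).mpr ⟨t + 1, ht, rfl⟩)
    subst hk
    have : t + 1 = i := nth_inj hP _ ht (by omega) hv
    rw [← hu]
    congr 1
    omega
  · intro h
    subst h
    refine (edge_iff hP).mpr ⟨j, i - 1, by omega, rfl, ?_⟩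
    congr 1
    omega

/-- unique out-neighbour of an internal-position node -/
lemma succ_unique {j : Fin np} {i : ℕ} (h1 : 1 ≤ i) (h2 : i + 1 < (P j).length)
    (w : Fin (m + 2)) : (nth (P j) i, w) ∈ E ↔ w = nth (P j) (i + 1) := by
  constructor
  · intro h
    obtain ⟨k, t, ht, hu, hv⟩ := (edge_iff hP).mp h
    have hint : Internal m P j (nth (P j) i) := internal_nth hP h1 h2
    have hk : k = j := path_unique hP hint (by
      rw [← hu]; exact (mem_iff_nth hP).mpr ⟨t, by omega, rfl⟩)
    subst hk
    have : t = i := nth_inj hP _ (by omega) (by omega) hu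
    rw [← hv, this]
  · intro h
    subst h
    exact (edge_iff hP).mpr ⟨j, i, h2, rfl, rfl⟩

/-- in-neighbours of the sink are exactly the penultimate nodes of the paths -/
lemma pred_snk (u : Fin (m + 2)) :
    (u, (Fin.last (m + 1) : Fin (m + 2))) ∈ E ↔
      ∃ j, u = nth (P j) ((P j).length - 2) := by
  constructor
  · intro h
    obtain ⟨j, t, ht, hu, hv⟩ := (edge_iff hP).mp h
    refine ⟨j, ?_⟩
    rw [← nth_lastIdx hP j] at hv
    have := nth_inj hP j ht (by have := two_le_length hP j; omega) hv
    rw [← hu]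
    congr 1
    omega
  · rintro ⟨j, rfl⟩
    have h2 := two_le_length hP j
    refine (edge_iff hP).mpr ⟨j, (P j).length - 2, by omega, rfl, ?_⟩
    have : (P j).length - 2 + 1 = (P j).length - 1 := by omega
    rw [this, nth_lastIdx hP j]

/-- penultimate nodes of distinct paths are distinct -/
lemma pen_inj {j k : Fin np}
    (h : nth (P j) ((P j).length - 2) = nth (P k) ((P k).length - 2)) : j = k := by
  have h2j := two_le_length hP j
  have h2k := two_le_length hP k
  by_cases hj : (P j).length = 2
  · by_cases hk : (P k).length = 2
    · exact hP.single_edge_unique j k hj hk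
    · exfalso
      -- pen k is internal, pen j = 0
      have hintk : Internal m P k (nth (P k) ((P k).length - 2)) :=
        internal_nth hP (j := k) (i := (P k).length - 2) (by omega) (by omega)
      rw [← h] at hintk
      have : nth (P j) ((P j).length - 2) = 0 := by
        rw [hj]; exact nth_zero hP j
      exact hintk.2.1 this
  · by_cases hk : (P k).length = 2
    · exfalso
      have hintj : Internal m P j (nth (P j) ((P j).length - 2)) :=
        internal_nth hP (j := j) (i := (P j).length - 2) (by omega) (by omega)
      rw [h] at hintj
      have : nth (P k) ((P k).length - 2) = 0 := by
        rw [hk]; exact nth_zero hP k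
      exact hintj.2.1 this
    · have hintj : Internal m P j (nth (P j) ((P j).length - 2)) :=
        internal_nth hP (by omega) (by omega)
      exact (path_unique hP hintj (h ▸ (mem_iff_nth hP).mpr
        ⟨(P k).length - 2, by omega, rfl⟩)).symm

section Matrices

variable {F : Type*} [Field F]

lemma height_lt {H : Matrix (Fin (m + 2)) (Fin (m + 2)) F} (hH : Consistent E H) :
    ∃ h : Fin (m + 2) → ℕ, (∀ v, h v ≤ m + 2) ∧
      ∀ u v, (u, v) ∈ E → h u < h v := by
  classical
  set h : Fin (m + 2) → ℕ := fun v =>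
    if v = Fin.last (m + 1) then m + 2 else (P (hP.cover v).choose).idxOf v with hh
  have hidx : ∀ v : Fin (m + 2), v ≠ Fin.last (m + 1) →
      ∀ j i, i < (P j).length → nth (P j) i = v → i + 1 < (P j).length → h v = i := by
    intro v hv j i hi hnth hi2
    have hvmem : v ∈ P (hP.cover v).choose := (hP.cover v).choose_spec
    have hcases : (hP.cover v).choose = j ∨ v = 0 := by
      by_cases h0 : v = 0
      · right; exact h0
      · left
        exact path_unique hP ⟨(mem_iff_nth hP).mpr ⟨i, hi, hnth⟩, h0, hv⟩ hvmem
    have hval : h v = (P (hP.cover v).choose).idxOf v := by simp [hh, hv]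
    set k := (hP.cover v).choose with hk
    have hmemk : v ∈ P k := hvmem
    have hlt : (P k).idxOf v < (P k).length := List.idxOf_lt_length_iff.mpr hmemk
    have hget : nth (P k) ((P k).idxOf v) = v := by
      rw [nth_eq (P k) hlt]; exact List.idxOf_get hlt
    rcases hcases with hkj | h0
    · rw [hval, hkj]
      rw [hkj] at hget hlt
      exact nth_inj hP j hlt hi (by rw [hget, hnth])
    · -- v = 0 : index is 0 in both
      have hi0 : i = 0 := by
        have := nth_zero hP j
        exact nth_inj hP j hi (by have := two_le_length hP j; omega) (by rw [hnth, h0, this])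
      have : (P k).idxOf v = 0 := by
        have := nth_zero hP k
        exact nth_inj hP k hlt (by have := two_le_length hP k; omega) (by rw [hget, h0, this])
      rw [hval, this, hi0]
  refine ⟨h, ?_, ?_⟩
  · intro v
    by_cases hv : v = Fin.last (m + 1)
    · simp [hh, hv]
    · have hvmem : v ∈ P (hP.cover v).choose := (hP.cover v).choose_spec
      have hlt : (P (hP.cover v).choose).idxOf v < (P (hP.cover v).choose).length :=
        List.idxOf_lt_length_iff.mpr hvmem
      have hle : (P (hP.cover v).choose).length ≤ m + 2 := by
        have := List.Nodup.length_le_card (hP.nodup (hP.cover v).choose)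
        simpa using this
      simp only [hh, hv, if_false]
      omega
  · intro u v huv
    obtain ⟨j, i, hi, hu, hv⟩ := (edge_iff hP).mp huv
    have husnk : u ≠ Fin.last (m + 1) := by
      intro h; rw [h] at huv; exact no_out_snk hP v huv
    have hu_h : h u = i := hidx u husnk j i (by omega) hu hi
    by_cases hvs : v = Fin.last (m + 1)
    · have : h v = m + 2 := by simp [hh, hvs]
      rw [this, hu_h]
      have hle : (P j).length ≤ m + 2 := by
        have := List.Nodup.length_le_card (hP.nodup j)
        simpa using this
      omega
    · have hv2 : i + 1 + 1 < (P j).length := by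
        have : i + 1 ≠ (P j).length - 1 := by
          intro h
          apply hvs
          rw [← hv, h, nth_lastIdx hP j]
        omega
      have hv_h : h v = i + 1 := hidx v hvs j (i + 1) (by omega) hv hv2
      omega

lemma consistent_nilpotent {H : Matrix (Fin (m + 2)) (Fin (m + 2)) F}
    (hH : Consistent E H) : IsNilpotent H := by
  obtain ⟨h, hbd, hstep⟩ := height_lt hP hH
  have key : ∀ k : ℕ, ∀ v u, (H ^ k) v u ≠ 0 → h u + k ≤ h v := by
    intro k
    induction k with
    | zero =>
      intro v u hne
      simp only [pow_zero] at hne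
      rw [Matrix.one_apply] at hne
      by_cases hvu : v = u
      · subst hvu; omega
      · simp [hvu] at hne
    | succ k ih =>
      intro v u hne
      rw [pow_succ, Matrix.mul_apply] at hne
      obtain ⟨w, _, hw⟩ := Finset.exists_ne_zero_of_sum_ne_zero hne
      have h1 : (H ^ k) v w ≠ 0 := fun h => hw (by rw [h, zero_mul])
      have h2 : H w u ≠ 0 := fun h => hw (by rw [h, mul_zero])
      have hE : (u, w) ∈ E := by
        by_contra hnE
        exact h2 (hH w u hnE)
      have := hstep u w hE
      have := ih v w h1
      omega
  refine ⟨m + 3, ?_⟩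
  ext v u
  by_contra hne
  have := key (m + 3) v u hne
  have := hbd v
  omega

lemma oneSubDetUnit {H : Matrix (Fin (m + 2)) (Fin (m + 2)) F}
    (hH : Consistent E H) : IsUnit (1 - H).det :=
  (Matrix.isUnit_iff_isUnit_det _).mp (IsNilpotent.isUnit_one_sub (consistent_nilpotent hP hH))

end Matrices

section Inverse

variable {F : Type*} [Field F] {H : Matrix (Fin (m + 2)) (Fin (m + 2)) F}

lemma inv_rel₁ (hH : Consistent E H) (v b : Fin (m + 2)) :
    (1 - H)⁻¹ v b = (∑ u, H v u * (1 - H)⁻¹ u b) + (if v = b then 1 else 0) := by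
  have hdet := oneSubDetUnit hP hH
  have h1 : ((1 - H) * (1 - H)⁻¹) v b = (1 : Matrix (Fin (m + 2)) (Fin (m + 2)) F) v b := by
    rw [Matrix.mul_nonsing_inv _ hdet]
  rw [Matrix.mul_apply, Matrix.one_apply] at h1
  have h2 : ∀ u : Fin (m + 2), ((1 - H) v u) * (1 - H)⁻¹ u b
      = (if v = u then (1 - H)⁻¹ u b else 0) - H v u * (1 - H)⁻¹ u b := by
    intro u
    rw [Matrix.sub_apply, Matrix.one_apply, sub_mul]
    by_cases h : v = u <;> simp [h]
  rw [Finset.sum_congr rfl (fun u _ => h2 u), Finset.sum_sub_distrib, Finset.sum_ite_eq] at h1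
  simp only [Finset.mem_univ, if_true] at h1
  linear_combination h1

lemma inv_rel₂ (hH : Consistent E H) (c u : Fin (m + 2)) :
    (1 - H)⁻¹ c u = (∑ w, (1 - H)⁻¹ c w * H w u) + (if c = u then 1 else 0) := by
  have hdet := oneSubDetUnit hP hH
  have h1 : ((1 - H)⁻¹ * (1 - H)) c u = (1 : Matrix (Fin (m + 2)) (Fin (m + 2)) F) c u := by
    rw [Matrix.nonsing_inv_mul _ hdet]
  rw [Matrix.mul_apply, Matrix.one_apply] at h1
  have h2 : ∀ w : Fin (m + 2), (1 - H)⁻¹ c w * ((1 - H) w u)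
      = (if w = u then (1 - H)⁻¹ c w else 0) - (1 - H)⁻¹ c w * H w u := by
    intro w
    rw [Matrix.sub_apply, Matrix.one_apply, mul_sub]
    by_cases h : w = u <;> simp [h]
  rw [Finset.sum_congr rfl (fun w _ => h2 w), Finset.sum_sub_distrib] at h1
  rw [Finset.sum_ite_eq' Finset.univ u (fun w => (1 - H)⁻¹ c w)] at h1
  simp only [Finset.mem_univ, if_true] at h1
  linear_combination h1

lemma rowT0 (hH : Consistent E H) (b : Fin (m + 2)) :
    (1 - H)⁻¹ 0 b = if (0 : Fin (m + 2)) = b then 1 else 0 := by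
  rw [inv_rel₁ hP hH]
  have h0 : ∀ u, H 0 u = 0 := fun u => hH 0 u (no_in_zero hP u)
  simp [h0]

lemma colTsnk (hH : Consistent E H) (c : Fin (m + 2)) :
    (1 - H)⁻¹ c (Fin.last (m + 1)) = if c = Fin.last (m + 1) then 1 else 0 := by
  rw [inv_rel₂ hP hH]
  have h0 : ∀ w, H w (Fin.last (m + 1)) = 0 := fun w => hH w _ (no_out_snk hP w)
  simp [h0]

lemma T_pred (hH : Consistent E H) {j : Fin np} {i : ℕ}
    (h1 : 1 ≤ i) (h2 : i + 1 < (P j).length) (b : Fin (m + 2)) :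
    (1 - H)⁻¹ (nth (P j) i) b =
      H (nth (P j) i) (nth (P j) (i - 1)) * (1 - H)⁻¹ (nth (P j) (i - 1)) b
        + (if nth (P j) i = b then 1 else 0) := by
  rw [inv_rel₁ hP hH]
  congr 1
  refine Finset.sum_eq_single _ ?_ ?_
  · intro u _ hne
    have hnE : (u, nth (P j) i) ∉ E := fun hin => hne ((pred_unique hP h1 h2 u).mp hin)
    rw [hH _ u hnE, zero_mul]
  · intro h; exact absurd (Finset.mem_univ _) h

lemma T_succ (hH : Consistent E H) {j : Fin np} {i : ℕ}
    (h1 : 1 ≤ i) (h2 : i + 1 < (P j).length) (c : Fin (m + 2)) :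
    (1 - H)⁻¹ c (nth (P j) i) =
      (1 - H)⁻¹ c (nth (P j) (i + 1)) * H (nth (P j) (i + 1)) (nth (P j) i)
        + (if c = nth (P j) i then 1 else 0) := by
  rw [inv_rel₂ hP hH]
  congr 1
  refine Finset.sum_eq_single _ ?_ ?_
  · intro w _ hne
    have hnE : (nth (P j) i, w) ∉ E := fun hin => hne ((succ_unique hP h1 h2 w).mp hin)
    rw [hH w _ hnE, mul_zero]
  · intro h; exact absurd (Finset.mem_univ _) h

omit hP in
/-- product of the `H`-weights of the edges of `L` from position `a` to position `b` -/
def eprod (H : Matrix (Fin (m + 2)) (Fin (m + 2)) F) (L : List (Fin (m + 2))) (a b : ℕ) : F :=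
  ∏ i ∈ Finset.Ico a b, H (nth L (i + 1)) (nth L i)

omit hP in
lemma eprod_empty {H : Matrix (Fin (m + 2)) (Fin (m + 2)) F} {L : List (Fin (m + 2))}
    {a b : ℕ} (h : b ≤ a) : eprod H L a b = 1 := by
  rw [eprod, Finset.Ico_eq_empty (by omega), Finset.prod_empty]

omit hP in
lemma eprod_succ_top {H : Matrix (Fin (m + 2)) (Fin (m + 2)) F} {L : List (Fin (m + 2))}
    {a b : ℕ} (h : a ≤ b) :
    eprod H L a (b + 1) = eprod H L a b * H (nth L (b + 1)) (nth L b) :=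
  Finset.prod_Ico_succ_top h _

omit hP in
lemma eprod_succ_bot {H : Matrix (Fin (m + 2)) (Fin (m + 2)) F} {L : List (Fin (m + 2))}
    {a b : ℕ} (h : a < b) :
    eprod H L a b = H (nth L (a + 1)) (nth L a) * eprod H L (a + 1) b :=
  Finset.prod_eq_prod_Ico_succ_bot h _

omit hP in
lemma eprod_mul {H : Matrix (Fin (m + 2)) (Fin (m + 2)) F} {L : List (Fin (m + 2))}
    {a b c : ℕ} (h1 : a ≤ b) (h2 : b ≤ c) :
    eprod H L a b * eprod H L b c = eprod H L a c :=
  Finset.prod_Ico_consecutive _ h1 h2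

lemma colT (hH : Consistent E H) {j : Fin np} :
    ∀ t l : ℕ, t + 2 ≤ (P j).length → l + 2 ≤ (P j).length →
    (1 - H)⁻¹ (nth (P j) t) (nth (P j) l) = if t < l then 0 else eprod H (P j) l t := by
  intro t
  induction t with
  | zero =>
    intro l ht hl
    rw [nth_zero hP j, rowT0 hP hH]
    by_cases hl0 : l = 0
    · subst hl0
      rw [if_pos (nth_zero hP j).symm, if_neg (by omega), eprod_empty (le_refl 0)]
    · have hne : ¬ ((0 : Fin (m + 2)) = nth (P j) l) := by
        intro h
        have h2 : nth (P j) 0 = nth (P j) l := by rw [nth_zero hP j]; exact h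
        have := nth_inj hP j (by omega) (by omega) h2
        omega
      rw [if_neg hne, if_pos (by omega)]
  | succ t ih =>
    intro l ht hl
    rw [T_pred hP hH (i := t + 1) (by omega) (by omega)]
    simp only [Nat.add_sub_cancel]
    have ih' := ih l (by omega) hl
    have hd : (if nth (P j) (t + 1) = nth (P j) l then (1 : F) else 0)
        = if t + 1 = l then 1 else 0 := by
      by_cases h : t + 1 = l
      · rw [if_pos (by rw [h]), if_pos h]
      · rw [if_neg (fun hh => h (nth_inj hP j (by omega) (by omega) hh)), if_neg h]
    rw [hd, ih']
    rcases lt_trichotomy (t + 1) l with hc | hc | hc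
    · rw [if_pos (show t < l by omega), mul_zero, zero_add,
        if_neg (show ¬ t + 1 = l by omega), if_pos hc]
    · rw [if_pos (show t < l by omega), mul_zero, zero_add, if_pos hc,
        if_neg (show ¬ t + 1 < l by omega), ← hc, eprod_empty (le_refl _)]
    · rw [if_neg (show ¬ t < l by omega), if_neg (show ¬ t + 1 = l by omega), add_zero,
        if_neg (show ¬ t + 1 < l by omega), eprod_succ_top (show l ≤ t by omega), mul_comm]

lemma rowT (hH : Consistent E H) {j : Fin np} :
    ∀ d l : ℕ, l + d = (P j).length - 1 → 1 ≤ l →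
    (1 - H)⁻¹ (Fin.last (m + 1)) (nth (P j) l) = eprod H (P j) l ((P j).length - 1) := by
  intro d
  induction d with
  | zero =>
    intro l hl h1
    have hll : l = (P j).length - 1 := by omega
    rw [hll, nth_lastIdx hP j, colTsnk hP hH, if_pos rfl, eprod_empty (le_refl _)]
  | succ d ih =>
    intro l hl h1
    have hlen := two_le_length hP j
    rw [T_succ hP hH (i := l) h1 (by omega)]
    have hne : ¬ (Fin.last (m + 1) = nth (P j) l) := by
      intro h
      have h2 : nth (P j) ((P j).length - 1) = nth (P j) l := by
        rw [nth_lastIdx hP j]; exact h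
      have := nth_inj hP j (by omega) (by omega) h2
      omega
    rw [if_neg hne, add_zero, ih (l + 1) (by omega) (by omega)]
    rw [eprod_succ_bot (by omega : l < (P j).length - 1), mul_comm]


lemma sumT (hH : Consistent E H) :
    (1 - H)⁻¹ (Fin.last (m + 1)) 0 = ∑ j, eprod H (P j) 0 ((P j).length - 1) := by
  classical
  rw [inv_rel₁ hP hH]
  have hδ : (if (Fin.last (m + 1) : Fin (m + 2)) = 0 then (1 : F) else 0) = 0 := by
    rw [if_neg]
    intro h
    have := congrArg Fin.val h
    simp at this
  rw [hδ, add_zero]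
  have hsub : (∑ u, H (Fin.last (m + 1)) u * (1 - H)⁻¹ u 0)
      = ∑ u ∈ Finset.univ.image (fun j => nth (P j) ((P j).length - 2)), 
          H (Fin.last (m + 1)) u * (1 - H)⁻¹ u 0 := by
    symm
    apply Finset.sum_subset (Finset.subset_univ _)
    intro u _ hu
    by_cases hE : (u, Fin.last (m + 1)) ∈ E
    · obtain ⟨j, hj⟩ := (pred_snk hP u).mp hE
      exact absurd (Finset.mem_image.mpr ⟨j, Finset.mem_univ j, hj.symm⟩) hu
    · rw [hH _ u hE, zero_mul]
  rw [hsub, Finset.sum_image (fun x _ y _ h => pen_inj hP h)]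
  apply Finset.sum_congr rfl
  intro j _
  have hlen := two_le_length hP j
  have hT : (1 - H)⁻¹ (nth (P j) ((P j).length - 2)) 0
      = eprod H (P j) 0 ((P j).length - 2) := by
    have hc := colT hP hH (j := j) ((P j).length - 2) 0 (by omega) (by omega)
    rw [nth_zero hP j] at hc
    rw [hc, if_neg (by omega)]
  have hHlast : H (Fin.last (m + 1)) (nth (P j) ((P j).length - 2))
      = H (nth (P j) ((P j).length - 2 + 1)) (nth (P j) ((P j).length - 2)) := by
    congr 2
    rw [show (P j).length - 2 + 1 = (P j).length - 1 by omega, nth_lastIdx hP j]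
  rw [hT, hHlast, mul_comm, ← eprod_succ_top (by omega : 0 ≤ (P j).length - 2),
    show (P j).length - 2 + 1 = (P j).length - 1 by omega]

end Inverse

variable {F : Type*} [Field F]

lemma eprod_ne_zero {G : Matrix (Fin (m + 2)) (Fin (m + 2)) F}
    (hGnz : ∀ e ∈ E, G e.2 e.1 ≠ 0) {j : Fin np} {a b : ℕ}
    (hb : b ≤ (P j).length - 1) : eprod G (P j) a b ≠ 0 := by
  have hlen := two_le_length hP j
  rw [eprod]
  apply Finset.prod_ne_zero_iff.mpr
  intro i hi
  rw [Finset.mem_Ico] at hi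
  have hE : (nth (P j) i, nth (P j) (i + 1)) ∈ E :=
    (edge_iff hP).mpr ⟨j, i, by omega, rfl, rfl⟩
  exact hGnz _ hE

lemma indexOf_nth {j : Fin np} {i : ℕ} (hi : i < (P j).length) :
    (P j).idxOf (nth (P j) i) = i := by
  have hmem : nth (P j) i ∈ P j := (mem_iff_nth hP).mpr ⟨i, hi, rfl⟩
  have hlt := List.idxOf_lt_length_iff.mpr hmem
  apply nth_inj hP j hlt hi
  rw [nth_eq (P j) hlt]
  exact List.idxOf_get hlt

end St16


theorem statement16 (m np : ℕ) (E : Finset (Fin (m + 2) × Fin (m + 2)))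
    (P : Fin np → List (Fin (m + 2))) (hPPN : IsPPN m E np P)
    (B C : Finset (Fin (m + 2)))
    -- the source is excited, the sink is measured, and every node is excited or measured:
    (hB : (0 : Fin (m + 2)) ∈ B) (hC : Fin.last (m + 1) ∈ C)
    (hBC : B ∪ C = Finset.univ)
    -- at least `n_p - 1` paths have internal nodes `u ⪯ v` with `u ∈ B` and `v ∈ C`:
    (hpaths : ∃ J : Finset (Fin np), np - 1 ≤ J.card ∧
      ∀ j ∈ J, ∃ u v : Fin (m + 2), Internal m P j u ∧ Internal m P j v ∧
        (P j).idxOf u ≤ (P j).idxOf v ∧ u ∈ B ∧ v ∈ C)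
    (F : Type*) [Field F]
    (G : Matrix (Fin (m + 2)) (Fin (m + 2)) F) (hG : Consistent E G)
    -- all edge entries of `G` are nonzero:
    (hGnz : ∀ e ∈ E, G e.2 e.1 ≠ 0)
    (Gt : Matrix (Fin (m + 2)) (Fin (m + 2)) F) (hGt : Consistent E Gt)
    -- the `C × B` submatrices of `(I - G)⁻¹` and `(I - G̃)⁻¹` coincide:
    (hM : ∀ c ∈ C, ∀ b ∈ B, (1 - Gt)⁻¹ c b = (1 - G)⁻¹ c b) :
    Gt = G := by
  classical
  have hmem : ∀ v : Fin (m + 2), v ∈ B ∨ v ∈ C := by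
    intro v
    have : v ∈ B ∪ C := by rw [hBC]; exact Finset.mem_univ v
    exact Finset.mem_union.mp this
  -- suffix products agree at excited internal positions
  have hσ : ∀ j : Fin np, ∀ l : ℕ, 1 ≤ l → l ≤ (P j).length - 1 → St16.nth (P j) l ∈ B →
      St16.eprod Gt (P j) l ((P j).length - 1) = St16.eprod G (P j) l ((P j).length - 1) := by
    intro j l h1 h2 hBmem
    have e1 := St16.rowT hPPN hGt (j := j) ((P j).length - 1 - l) l (by omega) h1
    have e2 := St16.rowT hPPN hG (j := j) ((P j).length - 1 - l) l (by omega) h1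
    rw [← e1, ← e2]
    exact hM _ hC _ hBmem
  -- prefix products agree at measured internal positions
  have hπ : ∀ j : Fin np, ∀ t : ℕ, t + 2 ≤ (P j).length → St16.nth (P j) t ∈ C →
      St16.eprod Gt (P j) 0 t = St16.eprod G (P j) 0 t := by
    intro j t h2 hCmem
    have hlen := St16.two_le_length hPPN j
    have hbm : St16.nth (P j) 0 ∈ B := by rw [St16.nth_zero hPPN j]; exact hB
    have e1 := St16.colT hPPN hGt (j := j) t 0 h2 (by omega)
    have e2 := St16.colT hPPN hG (j := j) t 0 h2 (by omega)
    rw [if_neg (by omega)] at e1 e2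
    rw [← e1, ← e2]
    exact hM _ hCmem _ hbm
  -- total path products agree for paths with an excited-before-measured internal pair
  have hTPpair : ∀ j : Fin np,
      (∃ u v : Fin (m + 2), Internal m P j u ∧ Internal m P j v ∧
        (P j).idxOf u ≤ (P j).idxOf v ∧ u ∈ B ∧ v ∈ C) →
      St16.eprod Gt (P j) 0 ((P j).length - 1) = St16.eprod G (P j) 0 ((P j).length - 1) := by
    rintro j ⟨u, v, hu, hv, hle, huB, hvC⟩
    obtain ⟨l, hl1, hl2, hlu⟩ := St16.internal_index hPPN hu
    obtain ⟨t, ht1, ht2, htv⟩ := St16.internal_index hPPN hv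
    have hlen := St16.two_le_length hPPN j
    have hidxu : (P j).idxOf u = l := by rw [← hlu]; exact St16.indexOf_nth hPPN (by omega)
    have hidxv : (P j).idxOf v = t := by rw [← htv]; exact St16.indexOf_nth hPPN (by omega)
    have hlt : l ≤ t := by rw [hidxu, hidxv] at hle; exact hle
    have hσl : St16.eprod Gt (P j) l ((P j).length - 1) = St16.eprod G (P j) l ((P j).length - 1) :=
      hσ j l hl1 (by omega) (by rw [hlu]; exact huB)
    have hπt : St16.eprod Gt (P j) 0 t = St16.eprod G (P j) 0 t :=
      hπ j t (by omega) (by rw [htv]; exact hvC)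
    have hseg : St16.eprod Gt (P j) l t = St16.eprod G (P j) l t := by
      have e1 := St16.colT hPPN hGt (j := j) t l (by omega) (by omega)
      have e2 := St16.colT hPPN hG (j := j) t l (by omega) (by omega)
      rw [if_neg (by omega)] at e1 e2
      rw [← e1, ← e2]
      exact hM _ (by rw [htv]; exact hvC) _ (by rw [hlu]; exact huB)
    have hsegne : St16.eprod G (P j) l t ≠ 0 := St16.eprod_ne_zero hPPN hGnz (by omega)
    have h1 : St16.eprod Gt (P j) l t * St16.eprod Gt (P j) t ((P j).length - 1)
        = St16.eprod Gt (P j) l ((P j).length - 1) := St16.eprod_mul hlt (by omega)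
    have h2 : St16.eprod G (P j) l t * St16.eprod G (P j) t ((P j).length - 1)
        = St16.eprod G (P j) l ((P j).length - 1) := St16.eprod_mul hlt (by omega)
    have hσt : St16.eprod Gt (P j) t ((P j).length - 1) = St16.eprod G (P j) t ((P j).length - 1) := by
      apply mul_left_cancel₀ hsegne
      rw [h2, ← hσl, ← h1, hseg]
    calc St16.eprod Gt (P j) 0 ((P j).length - 1)
        = St16.eprod Gt (P j) 0 t * St16.eprod Gt (P j) t ((P j).length - 1) :=
          (St16.eprod_mul (Nat.zero_le t) (by omega)).symm
      _ = St16.eprod G (P j) 0 t * St16.eprod G (P j) t ((P j).length - 1) := by rw [hπt, hσt]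
      _ = St16.eprod G (P j) 0 ((P j).length - 1) := St16.eprod_mul (Nat.zero_le t) (by omega)
  -- all total path products agree
  obtain ⟨J, hJcard, hJ⟩ := hpaths
  have hTPall : ∀ j : Fin np,
      St16.eprod Gt (P j) 0 ((P j).length - 1) = St16.eprod G (P j) 0 ((P j).length - 1) := by
    intro j
    by_cases hjJ : j ∈ J
    · exact hTPpair j (hJ j hjJ)
    · have hJsub : J ⊆ Finset.univ.erase j :=
        fun x hx => Finset.mem_erase.mpr ⟨fun h => hjJ (h ▸ hx), Finset.mem_univ x⟩
      have hcard : (Finset.univ.erase j).card = np - 1 := by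
        rw [Finset.card_erase_of_mem (Finset.mem_univ j), Finset.card_univ, Fintype.card_fin]
      have hJeq : J = Finset.univ.erase j :=
        Finset.eq_of_subset_of_card_le hJsub (by omega)
      have hsum : (∑ k, St16.eprod Gt (P k) 0 ((P k).length - 1))
          = ∑ k, St16.eprod G (P k) 0 ((P k).length - 1) := by
        rw [← St16.sumT hPPN hGt, ← St16.sumT hPPN hG]
        exact hM _ hC _ hB
      rw [← Finset.add_sum_erase _ _ (Finset.mem_univ j),
        ← Finset.add_sum_erase _ _ (Finset.mem_univ j)] at hsum
      have heq : (∑ k ∈ Finset.univ.erase j, St16.eprod Gt (P k) 0 ((P k).length - 1))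
          = ∑ k ∈ Finset.univ.erase j, St16.eprod G (P k) 0 ((P k).length - 1) :=
        Finset.sum_congr rfl (fun k hk => hTPpair k (hJ k (hJeq ▸ hk)))
      rw [heq] at hsum
      exact add_right_cancel hsum
  -- entrywise equality
  ext v u
  by_cases hE : (u, v) ∈ E
  swap
  · rw [hG v u hE, hGt v u hE]
  obtain ⟨j, i, hi, hu, hv⟩ := (St16.edge_iff hPPN).mp hE
  subst hu hv
  have hlen := St16.two_le_length hPPN j
  have hyp : ∀ t : ℕ, t ≤ (P j).length - 1 →
      St16.eprod Gt (P j) 0 t = St16.eprod G (P j) 0 t ∨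
      St16.eprod Gt (P j) t ((P j).length - 1) = St16.eprod G (P j) t ((P j).length - 1) := by
    intro t ht
    rcases Nat.eq_zero_or_pos t with rfl | ht0
    · left; rw [St16.eprod_empty (le_refl 0), St16.eprod_empty (le_refl 0)]
    · by_cases htl : t = (P j).length - 1
      · left; rw [htl]; exact hTPall j
      · rcases hmem (St16.nth (P j) t) with hBm | hCm
        · right; exact hσ j t ht0 (by omega) hBm
        · left; exact hπ j t (by omega) hCm
  have h1 := hyp i (by omega)
  have h2 := hyp (i + 1) (by omega)
  have hπne : ∀ t, t ≤ (P j).length - 1 → St16.eprod G (P j) 0 t ≠ 0 :=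
    fun t ht => St16.eprod_ne_zero hPPN hGnz ht
  have hσne : ∀ t, t ≤ (P j).length - 1 → St16.eprod G (P j) t ((P j).length - 1) ≠ 0 :=
    fun t ht => St16.eprod_ne_zero hPPN hGnz (le_refl _)
  rcases h1 with hπ1 | hσ1 <;> rcases h2 with hπ2 | hσ2
  · -- π, π
    have e1 := St16.eprod_succ_top (H := Gt) (L := P j) (Nat.zero_le i)
    have e2 := St16.eprod_succ_top (H := G) (L := P j) (Nat.zero_le i)
    rw [hπ2, hπ1] at e1
    rw [e2] at e1
    exact (mul_left_cancel₀ (hπne i (by omega)) e1).symm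
  · -- π at i, σ at i+1
    have A : St16.eprod Gt (P j) 0 ((P j).length - 1)
        = St16.eprod Gt (P j) 0 i * (Gt (St16.nth (P j) (i + 1)) (St16.nth (P j) i)
            * St16.eprod Gt (P j) (i + 1) ((P j).length - 1)) := by
      rw [← St16.eprod_mul (H := Gt) (L := P j) (a := 0) (b := i) (c := (P j).length - 1)
        (Nat.zero_le i) (by omega),
        St16.eprod_succ_bot (H := Gt) (L := P j) (a := i) (b := (P j).length - 1) (by omega)]
    have Bq : St16.eprod G (P j) 0 ((P j).length - 1)
        = St16.eprod G (P j) 0 i * (G (St16.nth (P j) (i + 1)) (St16.nth (P j) i)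
            * St16.eprod G (P j) (i + 1) ((P j).length - 1)) := by
      rw [← St16.eprod_mul (H := G) (L := P j) (a := 0) (b := i) (c := (P j).length - 1)
        (Nat.zero_le i) (by omega),
        St16.eprod_succ_bot (H := G) (L := P j) (a := i) (b := (P j).length - 1) (by omega)]
    rw [hTPall j, hπ1, hσ2] at A
    rw [Bq] at A
    have A2 := mul_left_cancel₀ (hπne i (by omega)) A
    exact (mul_right_cancel₀ (hσne (i + 1) (by omega)) A2).symm
  · -- σ at i, π at i+1
    have A : St16.eprod Gt (P j) 0 (i + 1) * St16.eprod Gt (P j) i ((P j).length - 1)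
        = St16.eprod Gt (P j) 0 ((P j).length - 1) * Gt (St16.nth (P j) (i + 1)) (St16.nth (P j) i) := by
      rw [St16.eprod_succ_top (H := Gt) (L := P j) (Nat.zero_le i),
        ← St16.eprod_mul (H := Gt) (L := P j) (a := 0) (b := i) (c := (P j).length - 1)
          (Nat.zero_le i) (by omega)]
      ring
    have Bq : St16.eprod G (P j) 0 (i + 1) * St16.eprod G (P j) i ((P j).length - 1)
        = St16.eprod G (P j) 0 ((P j).length - 1) * G (St16.nth (P j) (i + 1)) (St16.nth (P j) i) := by
      rw [St16.eprod_succ_top (H := G) (L := P j) (Nat.zero_le i),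
        ← St16.eprod_mul (H := G) (L := P j) (a := 0) (b := i) (c := (P j).length - 1)
          (Nat.zero_le i) (by omega)]
      ring
    rw [hπ2, hσ1, hTPall j] at A
    rw [Bq] at A
    rw [mul_comm (St16.eprod G (P j) 0 ((P j).length - 1)) _,
      mul_comm (St16.eprod G (P j) 0 ((P j).length - 1)) _] at A
    exact (mul_right_cancel₀ (hπne ((P j).length - 1) (le_refl _)) A).symm
  · -- σ, σ
    have e1 := St16.eprod_succ_bot (H := Gt) (L := P j) (a := i) (b := (P j).length - 1)
      (by omega)
    have e2 := St16.eprod_succ_bot (H := G) (L := P j) (a := i) (b := (P j).length - 1)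
      (by omega)
    rw [hσ1, hσ2] at e1
    rw [e2] at e1
    exact (mul_right_cancel₀ (hσne (i + 1) (by omega)) e1).symm


end
end
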